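/- arXiv:1701.05318 — 2 statements merged into one kernel-verified Lean document; each statement's English description precedes it below -/
import Mathlib

section
/- Let ψ : ℝ → ℝ be a C^∞ function with ψ(0) = 0 such that ψ(y) = sin(7π/5) for every y ∈ [7π/15, 8π/15], and suppose that ∫₀^{7π/15} cos(3y)·ψ(y) dy = (1/3)·sin(7π/5)². Set α := (1/3)·cos(7π/5)·sin(7π/5) + ∫₀^{7π/15} sin(3y)·ψ(y) dy and define φ : ℝ → ℝ by φ(x) = α·sin(3x) − (1/3)·∫₀ˣ sin(3(x−y))·ψ′(y) dy. Then φ(x) = 0 for every x ∈ [7π/15, 8π/15]. -/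
open Real

/-- The variation-of-constants solution
`φ(x) = α·sin(3x) − (1/3)·∫₀ˣ sin(3(x−y))·ψ′(y) dy`. -/
noncomputable def phiSol (ψ : ℝ → ℝ) (α : ℝ) : ℝ → ℝ :=
  fun x => α * Real.sin (3 * x)
    - (1 / 3) * ∫ y in (0:ℝ)..x, Real.sin (3 * (x - y)) * deriv ψ y

/-!
Integrating by parts and expanding `cos (3 * (x - y))`, the condition `ψ 0 = 0` gives
`φ x = sin (3x) * (α - S x) - cos (3x) * C x` with `C x = ∫₀ˣ cos (3y) ψ y` and
`S x = ∫₀ˣ sin (3y) ψ y`. On the control interval `ψ` is the constant `c = sin (3a)`,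
`a = 7π/15`, so there `C x = C a + c/3 (sin 3x - sin 3a)` and
`S x = S a + c/3 (cos 3a - cos 3x)`. The hypothesis on `C a` and the choice of `α` are
exactly what makes `C x = c/3 sin 3x` and `α - S x = c/3 cos 3x`, and the two terms cancel.
-/

open intervalIntegral

variable {ψ : ℝ → ℝ}

theorem integral_sin_mul_sub_mul_deriv (hψ : ContDiff ℝ 1 ψ) (k x : ℝ) :
    ∫ y in (0:ℝ)..x, sin (k * (x - y)) * deriv ψ y
      = -sin (k * x) * ψ 0 + k * ∫ y in (0:ℝ)..x, cos (k * (x - y)) * ψ y := by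
  have hsin : ∀ y, HasDerivAt (fun y => sin (k * (x - y))) (cos (k * (x - y)) * -k) y := by
    intro y
    simpa using (((hasDerivAt_id y).const_sub x).const_mul k).sin
  rw [integral_mul_deriv_eq_deriv_mul (fun y _ => hsin y)
    (fun y _ => (hψ.differentiable one_ne_zero y).hasDerivAt)
    (Continuous.intervalIntegrable (by fun_prop) _ _)
    ((hψ.continuous_deriv le_rfl).intervalIntegrable _ _)]
  have hneg : (fun y => cos (k * (x - y)) * -k * ψ y)
      = fun y => -(k * (cos (k * (x - y)) * ψ y)) := by
    funext y; ring
  rw [hneg, integral_neg, integral_const_mul]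
  simp only [sub_self, mul_zero, sin_zero, zero_mul, sub_zero]
  ring

theorem integral_cos_mul_sub_mul (hψ : Continuous ψ) (k x a b : ℝ) :
    ∫ y in a..b, cos (k * (x - y)) * ψ y
      = cos (k * x) * (∫ y in a..b, cos (k * y) * ψ y)
        + sin (k * x) * ∫ y in a..b, sin (k * y) * ψ y := by
  rw [← integral_const_mul, ← integral_const_mul, ← integral_add
    (Continuous.intervalIntegrable (by fun_prop) _ _)
    (Continuous.intervalIntegrable (by fun_prop) _ _)]
  refine integral_congr fun y _ => ?_
  simp only [mul_sub, cos_sub]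
  ring

theorem integral_cos_mul_of_eqOn {a b c k : ℝ} (hk : k ≠ 0)
    (h : ∀ y ∈ Set.uIcc a b, ψ y = c) :
    ∫ y in a..b, cos (k * y) * ψ y = c / k * (sin (k * b) - sin (k * a)) := by
  rw [integral_congr fun y hy => by rw [h y hy], integral_mul_const,
    integral_comp_mul_left (fun y => cos y) hk, integral_cos]
  rw [smul_eq_mul]
  field_simp

theorem integral_sin_mul_of_eqOn {a b c k : ℝ} (hk : k ≠ 0)
    (h : ∀ y ∈ Set.uIcc a b, ψ y = c) :
    ∫ y in a..b, sin (k * y) * ψ y = c / k * (cos (k * a) - cos (k * b)) := by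
  rw [integral_congr fun y hy => by rw [h y hy], integral_mul_const,
    integral_comp_mul_left (fun y => sin y) hk, integral_sin]
  rw [smul_eq_mul]
  field_simp

theorem phiSol_eq_of_map_zero (hψ : ContDiff ℝ 1 ψ) (hψ0 : ψ 0 = 0) (α x : ℝ) :
    phiSol ψ α x = sin (3 * x) * (α - ∫ y in (0:ℝ)..x, sin (3 * y) * ψ y)
      - cos (3 * x) * ∫ y in (0:ℝ)..x, cos (3 * y) * ψ y := by
  rw [phiSol, integral_sin_mul_sub_mul_deriv hψ, integral_cos_mul_sub_mul hψ.continuous, hψ0]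
  ring

theorem stmt_5 (ψ : ℝ → ℝ) (hψ : ContDiff ℝ (⊤ : ℕ∞) ψ) (hψ0 : ψ 0 = 0)
    (hconst : ∀ y ∈ Set.Icc (7 * π / 15) (8 * π / 15), ψ y = Real.sin (7 * π / 5))
    (hint : (∫ y in (0:ℝ)..(7 * π / 15), Real.cos (3 * y) * ψ y)
      = (1 / 3) * Real.sin (7 * π / 5) ^ 2) :
    ∀ x ∈ Set.Icc (7 * π / 15) (8 * π / 15),
      phiSol ψ
        ((1 / 3) * Real.cos (7 * π / 5) * Real.sin (7 * π / 5)
          + ∫ y in (0:ℝ)..(7 * π / 15), Real.sin (3 * y) * ψ y) x = 0 := by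
  intro x ⟨hax, hxb⟩
  have hψ1 : ContDiff ℝ 1 ψ := hψ.of_le (by exact_mod_cast le_top)
  have hcontrol : ∀ y ∈ Set.uIcc (7 * π / 15) x, ψ y = sin (7 * π / 5) := by
    rw [Set.uIcc_of_le hax]
    exact fun y hy => hconst y ⟨hy.1, hy.2.trans hxb⟩
  have hsplit (f : ℝ → ℝ) (hf : Continuous f) :
      ∫ y in (0:ℝ)..x, f y * ψ y
        = (∫ y in (0:ℝ)..(7 * π / 15), f y * ψ y) + ∫ y in (7 * π / 15)..x, f y * ψ y :=
    (integral_add_adjacent_intervals (Continuous.intervalIntegrable (by fun_prop) _ _)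
      (Continuous.intervalIntegrable (by fun_prop) _ _)).symm
  have h3a : 3 * (7 * π / 15) = 7 * π / 5 := by ring
  rw [phiSol_eq_of_map_zero hψ1 hψ0, hsplit _ (by fun_prop), hsplit _ (by fun_prop), hint,
    integral_cos_mul_of_eqOn three_ne_zero hcontrol,
    integral_sin_mul_of_eqOn three_ne_zero hcontrol, h3a]
  ring
end

section
/- Let n ≥ 2, let I ⊂ ℝ be an open interval, let U ⊂ ℝ^{n−1} be a nonempty open set, and set ω̃ := I × U ⊂ ℝⁿ with points written x = (x₁, x′). Let a₀, a₁, a₂, a₃ : ω̃ → ℝ be C³ functions such that for every x ∈ ω̃: a₁(x) ≠ 0, ∂_{x₁}(a₂/a₁)(x) ≠ 0, and ∂_{x₁}( ∂_{x₁}(a₃/a₁) / ∂_{x₁}(a₂/a₁) )(x) ≠ 0. If ∂_{x₁}( ∂_{x₁}( ∂_{x₁}(a₀/a₁) / ∂_{x₁}(a₂/a₁) ) / ∂_{x₁}( ∂_{x₁}(a₃/a₁) / ∂_{x₁}(a₂/a₁) ) )(x) = 0 for every x ∈ ω̃, then there exist continuous functions λ₁, λ₂, λ₃ : U → ℝ such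 that a₀(x₁, x′) = λ₁(x′)·a₁(x₁, x′) + λ₂(x′)·a₂(x₁, x′) + λ₃(x′)·a₃(x₁, x′) for every (x₁, x′) ∈ ω̃. -/
open Real

/-- Partial derivative in the first variable `x₁` of a function on `ℝ × ℝ^{n-1}`. -/
noncomputable def d1 {m : ℕ} (f : ℝ × (Fin m → ℝ) → ℝ) : ℝ × (Fin m → ℝ) → ℝ :=
  fun p => deriv (fun s => f (s, p.2)) p.1

/-! Write `bᵢ = aᵢ / a₁` and `cᵢ = ∂₁bᵢ / ∂₁b₂`. The hypothesis says `∂₁(∂₁c₀ / ∂₁c₃) = 0`, so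
`∂₁c₀ = λ₃(x′) ∂₁c₃`. Integrating in `x₁` along the interval `I` gives `c₀ = λ₃ c₃ + λ₂(x′)`, that is
`∂₁b₀ = λ₃ ∂₁b₃ + λ₂ ∂₁b₂`, and integrating once more gives `b₀ = λ₃ b₃ + λ₂ b₂ + λ₁(x′)`. Each
constant of integration is the restriction to a slice `x₁ = t` of a function continuous on `I × U`,
hence continuous in `x′`. -/

theorem Set.OrdConnected.eq_of_hasDerivAt_eq_zero {I : Set ℝ} (hI : I.OrdConnected) {φ : ℝ → ℝ}
    (hφ : ∀ s ∈ I, HasDerivAt φ 0 s) {s t : ℝ} (hs : s ∈ I) (ht : t ∈ I) : φ s = φ t := by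
  have h := hI.convex.norm_image_sub_le_of_norm_hasDerivWithin_le
    (fun x hx => (hφ x hx).hasDerivWithinAt) (fun _ _ => le_refl ‖(0 : ℝ)‖) hs ht
  rw [norm_zero, zero_mul, norm_le_zero_iff, sub_eq_zero] at h
  exact h.symm

section d1

variable {m : ℕ} {f : ℝ × (Fin m → ℝ) → ℝ}

theorem hasDerivAt_d1 {p : ℝ × (Fin m → ℝ)} (hf : DifferentiableAt ℝ f p) :
    HasDerivAt (fun s => f (s, p.2)) (d1 f p) p.1 :=
  (hf.comp p.1 (differentiableAt_id.prodMk (differentiableAt_const p.2))).hasDerivAt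

theorem d1_eq_fderiv_apply {p : ℝ × (Fin m → ℝ)} (hf : DifferentiableAt ℝ f p) :
    d1 f p = fderiv ℝ f p (1, 0) := by
  have h := hf.hasFDerivAt.comp_hasDerivAt p.1
    ((hasDerivAt_id p.1).prodMk (hasDerivAt_const p.1 p.2))
  exact (hasDerivAt_d1 hf).unique (by simpa [Function.comp_def] using h)

theorem ContDiffOn.d1_of_isOpen {k n : WithTop ℕ∞} {S : Set (ℝ × (Fin m → ℝ))}
    (hf : ContDiffOn ℝ n f S) (hS : IsOpen S) (hkn : k + 1 ≤ n) :
    ContDiffOn ℝ k (d1 f) S := by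
  have hfd : ContDiffOn ℝ k (fun p => fderiv ℝ f p (1, 0)) S :=
    ((hf.of_le hkn).fderiv_of_isOpen hS le_rfl).clm_apply contDiffOn_const
  refine hfd.congr fun p hp => d1_eq_fderiv_apply ?_
  exact ((hf.of_le hkn).contDiffAt (hS.mem_nhds hp)).differentiableAt (by simp)

theorem ContDiffOn.d1_div_d1 {k n : WithTop ℕ∞} {S : Set (ℝ × (Fin m → ℝ))}
    {g : ℝ × (Fin m → ℝ) → ℝ} (hf : ContDiffOn ℝ n f S) (hg : ContDiffOn ℝ n g S)
    (hS : IsOpen S) (hkn : k + 1 ≤ n) (hg0 : ∀ p ∈ S, d1 g p ≠ 0) :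
    ContDiffOn ℝ k (fun p => d1 f p / d1 g p) S :=
  (hf.d1_of_isOpen hS hkn).div (hg.d1_of_isOpen hS hkn) hg0

end d1

theorem exists_eq_sum_add_of_d1_eq_sum {m : ℕ} {ι : Type*} [Fintype ι] {I : Set ℝ}
    {U : Set (Fin m → ℝ)} (hI : I.OrdConnected) {f : ℝ × (Fin m → ℝ) → ℝ}
    {g : ι → ℝ × (Fin m → ℝ) → ℝ} {c : ι → (Fin m → ℝ) → ℝ}
    (hf : ∀ p ∈ I ×ˢ U, DifferentiableAt ℝ f p)
    (hg : ∀ i, ∀ p ∈ I ×ˢ U, DifferentiableAt ℝ (g i) p) (hc : ∀ i, ContinuousOn (c i) U)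
    (hfg : ∀ p ∈ I ×ˢ U, d1 f p = ∑ i, c i p.2 * d1 (g i) p) :
    ∃ μ : (Fin m → ℝ) → ℝ, ContinuousOn μ U ∧
      ∀ p ∈ I ×ˢ U, f p = ∑ i, c i p.2 * g i p + μ p.2 := by
  rcases I.eq_empty_or_nonempty with rfl | ⟨t, ht⟩
  · exact ⟨0, continuousOn_const, by simp⟩
  set h := fun p : ℝ × (Fin m → ℝ) => f p - ∑ i, c i p.2 * g i p
  have hh_deriv : ∀ p ∈ I ×ˢ U, HasDerivAt (fun s => h (s, p.2)) 0 p.1 := by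
    intro p hp
    have := (hasDerivAt_d1 (hf p hp)).sub (HasDerivAt.fun_sum (u := Finset.univ)
      fun i _ => (hasDerivAt_d1 (hg i p hp)).const_mul (c i p.2))
    rwa [hfg p hp, sub_self] at this
  have hh_cont : ContinuousOn h (I ×ˢ U) := by
    have hf_cont : ContinuousOn f (I ×ˢ U) := fun p hp =>
      (hf p hp).continuousAt.continuousWithinAt
    refine hf_cont.sub ?_
    refine continuousOn_finsetSum _ fun i _ => ?_
    exact ((hc i).comp continuousOn_snd fun p hp => hp.2).mul
      fun p hp => (hg i p hp).continuousAt.continuousWithinAt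
  refine ⟨fun x => h (t, x), ?_, fun p hp => ?_⟩
  · exact hh_cont.comp (Continuous.continuousOn (by fun_prop)) fun x hx => ⟨ht, hx⟩
  · have := hI.eq_of_hasDerivAt_eq_zero (φ := fun s => h (s, p.2))
      (fun s hs => hh_deriv (s, p.2) ⟨hs, hp.2⟩) hp.1 ht
    simp only [h] at this ⊢
    linarith

theorem stmt_19_general (n : ℕ)
    (I : Set ℝ) (hIopen : IsOpen I) (hIinterval : I.OrdConnected)
    (U : Set (Fin (n - 1) → ℝ)) (hUopen : IsOpen U)
    (a₀ a₁ a₂ a₃ : ℝ × (Fin (n - 1) → ℝ) → ℝ)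
    (ha₀ : ContDiffOn ℝ 3 a₀ (I ×ˢ U)) (ha₁ : ContDiffOn ℝ 3 a₁ (I ×ˢ U))
    (ha₂ : ContDiffOn ℝ 3 a₂ (I ×ˢ U)) (ha₃ : ContDiffOn ℝ 3 a₃ (I ×ˢ U))
    (ha₁ne : ∀ p ∈ I ×ˢ U, a₁ p ≠ 0)
    (ha₂ne : ∀ p ∈ I ×ˢ U, d1 (fun q => a₂ q / a₁ q) p ≠ 0)
    (ha₃ne : ∀ p ∈ I ×ˢ U,
      d1 (fun q => d1 (fun r => a₃ r / a₁ r) q / d1 (fun r => a₂ r / a₁ r) q) p ≠ 0)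
    (hder : ∀ p ∈ I ×ˢ U,
      d1 (fun q =>
        d1 (fun r => d1 (fun w => a₀ w / a₁ w) r / d1 (fun w => a₂ w / a₁ w) r) q
          / d1 (fun r => d1 (fun w => a₃ w / a₁ w) r / d1 (fun w => a₂ w / a₁ w) r) q) p
        = 0) :
    ∃ lam₁ lam₂ lam₃ : (Fin (n - 1) → ℝ) → ℝ,
      ContinuousOn lam₁ U ∧ ContinuousOn lam₂ U ∧ ContinuousOn lam₃ U ∧
      ∀ p ∈ I ×ˢ U, a₀ p = lam₁ p.2 * a₁ p + lam₂ p.2 * a₂ p + lam₃ p.2 * a₃ p := by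
  have hS : IsOpen (I ×ˢ U) := hIopen.prod hUopen
  have hdiff : ∀ {k : WithTop ℕ∞} {f : ℝ × (Fin (n - 1) → ℝ) → ℝ}, ContDiffOn ℝ k f (I ×ˢ U) →
      k ≠ 0 → ∀ p ∈ I ×ˢ U, DifferentiableAt ℝ f p := fun hf hk p hp =>
    (hf.contDiffAt (hS.mem_nhds hp)).differentiableAt hk
  set b₀ := fun w => a₀ w / a₁ w
  set b₂ := fun w => a₂ w / a₁ w
  set b₃ := fun w => a₃ w / a₁ w
  set c₀ := fun r => d1 b₀ r / d1 b₂ r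
  set c₃ := fun r => d1 b₃ r / d1 b₂ r
  have hb₀ : ContDiffOn ℝ 3 b₀ (I ×ˢ U) := ha₀.div ha₁ ha₁ne
  have hb₂ : ContDiffOn ℝ 3 b₂ (I ×ˢ U) := ha₂.div ha₁ ha₁ne
  have hb₃ : ContDiffOn ℝ 3 b₃ (I ×ˢ U) := ha₃.div ha₁ ha₁ne
  have hc₀ : ContDiffOn ℝ 2 c₀ (I ×ˢ U) := hb₀.d1_div_d1 hb₂ hS (by norm_num) ha₂ne
  have hc₃ : ContDiffOn ℝ 2 c₃ (I ×ˢ U) := hb₃.d1_div_d1 hb₂ hS (by norm_num) ha₂ne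
  obtain ⟨lam₃, hlam₃, he_eq⟩ := exists_eq_sum_add_of_d1_eq_sum (ι := Fin 0) (g := ![])
    (c := ![]) hIinterval (hdiff (hc₀.d1_div_d1 hc₃ hS (by norm_num) ha₃ne) one_ne_zero)
    finZeroElim finZeroElim fun p hp => by rw [Fin.sum_univ_zero]; exact hder p hp
  obtain ⟨lam₂, hlam₂, hc₀_eq⟩ := exists_eq_sum_add_of_d1_eq_sum (g := ![c₃]) (c := ![lam₃])
    hIinterval (hdiff hc₀ two_ne_zero) (Fin.forall_fin_one.2 (hdiff hc₃ two_ne_zero))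
    (Fin.forall_fin_one.2 hlam₃) fun p hp => by
      simpa [div_eq_iff (ha₃ne p hp)] using he_eq p hp
  obtain ⟨lam₁, hlam₁, hb₀_eq⟩ := exists_eq_sum_add_of_d1_eq_sum (g := ![b₃, b₂])
    (c := ![lam₃, lam₂]) hIinterval (hdiff hb₀ three_ne_zero)
    (Fin.forall_fin_two.2 ⟨hdiff hb₃ three_ne_zero, hdiff hb₂ three_ne_zero⟩)
    (Fin.forall_fin_two.2 ⟨hlam₃, hlam₂⟩) fun p hp => by
      have h := hc₀_eq p hp
      rw [Fin.sum_univ_one] at h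
      change d1 b₀ p / d1 b₂ p = lam₃ p.2 * (d1 b₃ p / d1 b₂ p) + lam₂ p.2 at h
      rw [Fin.sum_univ_two]
      change _ = lam₃ p.2 * d1 b₃ p + lam₂ p.2 * d1 b₂ p
      have h₂ := ha₂ne p hp
      field_simp at h
      linear_combination h
  refine ⟨lam₁, lam₂, lam₃, hlam₁, hlam₂, hlam₃, fun p hp => ?_⟩
  have h := hb₀_eq p hp
  rw [Fin.sum_univ_two] at h
  change a₀ p / a₁ p = lam₃ p.2 * (a₃ p / a₁ p) + lam₂ p.2 * (a₂ p / a₁ p) + lam₁ p.2 at h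
  have h₁ := ha₁ne p hp
  field_simp at h
  linear_combination h

theorem stmt_19 (n : ℕ) (hn : 2 ≤ n)
    (I : Set ℝ) (hIopen : IsOpen I) (hIinterval : I.OrdConnected)
    (U : Set (Fin (n - 1) → ℝ)) (hUopen : IsOpen U) (hUne : U.Nonempty)
    (a₀ a₁ a₂ a₃ : ℝ × (Fin (n - 1) → ℝ) → ℝ)
    (ha₀ : ContDiffOn ℝ 3 a₀ (I ×ˢ U)) (ha₁ : ContDiffOn ℝ 3 a₁ (I ×ˢ U))
    (ha₂ : ContDiffOn ℝ 3 a₂ (I ×ˢ U)) (ha₃ : ContDiffOn ℝ 3 a₃ (I ×ˢ U))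
    (ha₁ne : ∀ p ∈ I ×ˢ U, a₁ p ≠ 0)
    (ha₂ne : ∀ p ∈ I ×ˢ U, d1 (fun q => a₂ q / a₁ q) p ≠ 0)
    (ha₃ne : ∀ p ∈ I ×ˢ U,
      d1 (fun q => d1 (fun r => a₃ r / a₁ r) q / d1 (fun r => a₂ r / a₁ r) q) p ≠ 0)
    (hder : ∀ p ∈ I ×ˢ U,
      d1 (fun q =>
        d1 (fun r => d1 (fun w => a₀ w / a₁ w) r / d1 (fun w => a₂ w / a₁ w) r) q
          / d1 (fun r => d1 (fun w => a₃ w / a₁ w) r / d1 (fun w => a₂ w / a₁ w) r) q) p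
        = 0) :
    ∃ lam₁ lam₂ lam₃ : (Fin (n - 1) → ℝ) → ℝ,
      ContinuousOn lam₁ U ∧ ContinuousOn lam₂ U ∧ ContinuousOn lam₃ U ∧
      ∀ p ∈ I ×ˢ U, a₀ p = lam₁ p.2 * a₁ p + lam₂ p.2 * a₂ p + lam₃ p.2 * a₃ p :=
  stmt_19_general n I hIopen hIinterval U hUopen a₀ a₁ a₂ a₃ ha₀ ha₁ ha₂ ha₃ ha₁ne ha₂ne ha₃ne hder
end
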